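/- arXiv:math/0403022 — 2 statements merged into one kernel-verified Lean document; each statement's English description precedes it below -/
import Mathlib

section
/- For $\gamma \geq 1$, with $\mu = ((1+\gamma)/\gamma)^2$, $q$ real, $p_c = \gamma/(\gamma+1)$, the function $F_1(t) = \mathrm{Re}\big(-\mu(p_c + t/2 - q)\big) + \tfrac12 \ln(p_c^2 + p_c t + t^2) - \tfrac{1}{2\gamma^2}\ln((1-p_c)^2 - (1-p_c)t + t^2)$ has derivative $F_1'(t) = -\frac{t^2\big((\gamma+1)^2 t^2 - (\gamma^2-1)t + 2\gamma\big)}{2\gamma^2(p_c^2 + p_c t + t^2)((1-p_c)^2 - (1-p_c)t + t^2)}$, and $F_1$ is nonincreasing on $[0, 2(1-p_c)]$. -/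
set_option maxHeartbeats 1000000 in
private lemma stmt3_key (γ t : ℝ) (hγ0 : 0 < γ) (hγ1 : (0:ℝ) < γ + 1)
    (hA : 0 < (γ/(γ+1)) ^ 2 + (γ/(γ+1)) * t + t ^ 2)
    (hB : 0 < (1 - γ/(γ+1)) ^ 2 - (1 - γ/(γ+1)) * t + t ^ 2) :
    -((1 + γ) / γ)^2 * (1 / 2) + (1 / 2) * ((γ/(γ+1) + 2 * t) / ((γ/(γ+1)) ^ 2 + (γ/(γ+1)) * t + t ^ 2))
        - (1 / (2 * γ ^ 2)) * ((-(1 - γ/(γ+1)) + 2 * t) / ((1 - γ/(γ+1)) ^ 2 - (1 - γ/(γ+1)) * t + t ^ 2))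
      = -(t ^ 2 * ((γ + 1) ^ 2 * t ^ 2 - (γ ^ 2 - 1) * t + 2 * γ)) /
          (2 * γ ^ 2 * ((γ/(γ+1)) ^ 2 + (γ/(γ+1)) * t + t ^ 2) *
            ((1 - γ/(γ+1)) ^ 2 - (1 - γ/(γ+1)) * t + t ^ 2)) := by
  have hγ : γ ≠ 0 := ne_of_gt hγ0
  have hγ1' : γ + 1 ≠ 0 := ne_of_gt hγ1
  have hA2 : (0:ℝ) < γ^2 + γ*(γ+1)*t + (γ+1)^2*t^2 := by
    have h : γ^2 + γ*(γ+1)*t + (γ+1)^2*t^2 = (γ+1)^2 * ((γ/(γ+1)) ^ 2 + (γ/(γ+1)) * t + t ^ 2) := by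
      field_simp
    rw [h]; positivity
  have hB2 : (0:ℝ) < 1 - (γ+1)*t + (γ+1)^2*t^2 := by
    have h : 1 - (γ+1)*t + (γ+1)^2*t^2 = (γ+1)^2 * ((1 - γ/(γ+1)) ^ 2 - (1 - γ/(γ+1)) * t + t ^ 2) := by
      field_simp; ring
    rw [h]; positivity
  have e1 : (γ/(γ+1) + 2 * t) / ((γ/(γ+1)) ^ 2 + (γ/(γ+1)) * t + t ^ 2)
      = (γ*(γ+1) + 2*(γ+1)^2*t) / (γ^2 + γ*(γ+1)*t + (γ+1)^2*t^2) := by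
    rw [div_eq_div_iff (ne_of_gt hA) (ne_of_gt hA2)]
    field_simp
  have e2 : (-(1 - γ/(γ+1)) + 2 * t) / ((1 - γ/(γ+1)) ^ 2 - (1 - γ/(γ+1)) * t + t ^ 2)
      = (-(γ+1) + 2*(γ+1)^2*t) / (1 - (γ+1)*t + (γ+1)^2*t^2) := by
    rw [div_eq_div_iff (ne_of_gt hB) (ne_of_gt hB2)]
    field_simp; ring
  have e3 : 2 * γ ^ 2 * ((γ/(γ+1)) ^ 2 + (γ/(γ+1)) * t + t ^ 2) *
            ((1 - γ/(γ+1)) ^ 2 - (1 - γ/(γ+1)) * t + t ^ 2)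
      = (2 * γ ^ 2 * (γ^2 + γ*(γ+1)*t + (γ+1)^2*t^2) * (1 - (γ+1)*t + (γ+1)^2*t^2)) / (γ+1)^4 := by
    field_simp; ring
  have hA3 : γ * (γ + (γ + 1) * t) + (γ + 1) ^ 2 * t ^ 2 ≠ 0 := by nlinarith
  rw [e1, e2, e3, div_div_eq_mul_div, eq_div_iff (by positivity)]
  field_simp [ne_of_gt hA2, ne_of_gt hB2]
  ring

/-- derivative formula and monotonicity of
`F₁(t) = Re f(p_c + t e^{iπ/3})` on `[0, 2(1-p_c)]`. -/
theorem stmt3 (γ q : ℝ) (hγ : 1 ≤ γ) :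
    let μ : ℝ := ((1 + γ) / γ) ^ 2
    let pc : ℝ := γ / (γ + 1)
    let F : ℝ → ℝ := fun t =>
      -μ * (pc + t / 2 - q) + (1 / 2) * Real.log (pc ^ 2 + pc * t + t ^ 2)
        - (1 / (2 * γ ^ 2)) * Real.log ((1 - pc) ^ 2 - (1 - pc) * t + t ^ 2)
    (∀ t ∈ Set.Icc (0 : ℝ) (2 * (1 - pc)),
      deriv F t =
        -(t ^ 2 * ((γ + 1) ^ 2 * t ^ 2 - (γ ^ 2 - 1) * t + 2 * γ)) /
          (2 * γ ^ 2 * (pc ^ 2 + pc * t + t ^ 2) *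
            ((1 - pc) ^ 2 - (1 - pc) * t + t ^ 2))) ∧
    AntitoneOn F (Set.Icc (0 : ℝ) (2 * (1 - pc))) := by
  intro μ pc F
  have hγ0 : (0:ℝ) < γ := lt_of_lt_of_le one_pos hγ
  have hγ1 : (0:ℝ) < γ + 1 := by linarith
  have hpc : (0:ℝ) < pc := div_pos hγ0 hγ1
  have hpc1 : (0:ℝ) < 1 - pc := by
    have : pc < 1 := (div_lt_one hγ1).mpr (by linarith)
    linarith
  have hA : ∀ t : ℝ, 0 < pc ^ 2 + pc * t + t ^ 2 := by
    intro t; nlinarith [sq_nonneg (t + pc / 2), sq_nonneg pc]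
  have hB : ∀ t : ℝ, 0 < (1 - pc) ^ 2 - (1 - pc) * t + t ^ 2 := by
    intro t; nlinarith [sq_nonneg (t - (1 - pc) / 2), sq_nonneg (1 - pc)]
  -- derivative of F at any t
  have hFd : ∀ t : ℝ, HasDerivAt F
      (-μ * (1 / 2) + (1 / 2) * ((pc + 2 * t) / (pc ^ 2 + pc * t + t ^ 2))
        - (1 / (2 * γ ^ 2)) * ((-(1 - pc) + 2 * t) / ((1 - pc) ^ 2 - (1 - pc) * t + t ^ 2))) t := by
    intro t
    have h1 : HasDerivAt (fun s : ℝ => -μ * (pc + s / 2 - q)) (-μ * (1 / 2)) t := by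
      have := ((((hasDerivAt_id t).div_const 2).const_add pc).sub_const q).const_mul (-μ)
      simpa using this
    have hA' : HasDerivAt (fun s : ℝ => pc ^ 2 + pc * s + s ^ 2) (pc + 2 * t) t := by
      have := (((hasDerivAt_id t).const_mul pc).const_add (pc ^ 2)).add (hasDerivAt_pow 2 t)
      simpa [Pi.add_def] using this
    have hB' : HasDerivAt (fun s : ℝ => (1 - pc) ^ 2 - (1 - pc) * s + s ^ 2)
        (-(1 - pc) + 2 * t) t := by
      have h := (((hasDerivAt_id t).const_mul (1 - pc)).const_sub ((1 - pc) ^ 2)).add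
        (hasDerivAt_pow 2 t)
      simpa [Pi.add_def] using h
    have h2 : HasDerivAt (fun s : ℝ => Real.log (pc ^ 2 + pc * s + s ^ 2))
        ((pc + 2 * t) / (pc ^ 2 + pc * t + t ^ 2)) t := hA'.log (ne_of_gt (hA t))
    have h3 : HasDerivAt (fun s : ℝ => Real.log ((1 - pc) ^ 2 - (1 - pc) * s + s ^ 2))
        ((-(1 - pc) + 2 * t) / ((1 - pc) ^ 2 - (1 - pc) * t + t ^ 2)) t := hB'.log (ne_of_gt (hB t))
    exact (h1.add (h2.const_mul (1 / 2))).sub (h3.const_mul (1 / (2 * γ ^ 2)))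
  have hderivF : ∀ t : ℝ, deriv F t =
      -(t ^ 2 * ((γ + 1) ^ 2 * t ^ 2 - (γ ^ 2 - 1) * t + 2 * γ)) /
        (2 * γ ^ 2 * (pc ^ 2 + pc * t + t ^ 2) *
          ((1 - pc) ^ 2 - (1 - pc) * t + t ^ 2)) := by
    intro t
    rw [(hFd t).deriv]
    exact stmt3_key γ t hγ0 hγ1 (hA t) (hB t)
  refine ⟨fun t _ => hderivF t, ?_⟩
  apply antitoneOn_of_deriv_nonpos (convex_Icc _ _)
  · exact fun x _ => (hFd x).differentiableAt.continuousAt.continuousWithinAt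
  · intro x hx
    exact (hFd x).differentiableAt.differentiableWithinAt
  · intro x hx
    rw [interior_Icc] at hx
    rw [hderivF x]
    apply div_nonpos_of_nonpos_of_nonneg
    · have hx0 : 0 ≤ x := le_of_lt hx.1
      have hx2 : (γ + 1) * x ≤ 2 := by
        have h2 : x < 2 * (1 - pc) := hx.2
        have hq : 1 - pc = 1 / (γ + 1) := by
          simp only [pc]; field_simp; ring
        rw [hq] at h2
        calc (γ + 1) * x ≤ (γ + 1) * (2 * (1 / (γ + 1))) :=
              mul_le_mul_of_nonneg_left (le_of_lt h2) (le_of_lt hγ1)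
          _ = 2 := by field_simp
      have hinner : 0 ≤ (γ + 1) ^ 2 * x ^ 2 - (γ ^ 2 - 1) * x + 2 * γ := by
        nlinarith [mul_nonneg (le_of_lt hγ0) (by linarith : (0:ℝ) ≤ 2 - (γ + 1) * x),
          sq_nonneg ((γ + 1) * x), mul_nonneg (le_of_lt hγ1) hx0]
      have := mul_nonneg (sq_nonneg x) hinner
      linarith
    · exact le_of_lt (mul_pos (mul_pos (mul_pos two_pos (pow_pos hγ0 2)) (hA x)) (hB x))
end

section
/- The Airy kernel satisfies the integral representation $\frac{\mathrm{Ai}(u)\mathrm{Ai}'(v) - \mathrm{Ai}'(u)\mathrm{Ai}(v)}{u-v} = \int_0^\infty \mathrm{Ai}(u+z)\mathrm{Ai}(z+v)\, dz$ for all real $u \neq v$. -/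
open MeasureTheory Set Filter ContDiff

/-- integral representation of the Airy kernel,
`(Ai(u)Ai'(v) - Ai'(u)Ai(v))/(u-v) = ∫₀^∞ Ai(u+z) Ai(z+v) dz`, for the Airy function
(characterized here by smoothness, the Airy ODE and exponential decay of `Ai`, `Ai'`). -/
theorem stmt18 (Ai : ℝ → ℝ) (hA : ContDiff ℝ (⊤ : ℕ∞) Ai)
    (hODE : ∀ x : ℝ, deriv (deriv Ai) x = x * Ai x)
    (C : ℝ) (hdecay : ∀ y : ℝ, |Ai y| ≤ C * Real.exp (-y))
    (hdecay' : ∀ y : ℝ, |deriv Ai y| ≤ C * Real.exp (-y))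
    (u v : ℝ) (huv : u ≠ v) :
    (Ai u * deriv Ai v - deriv Ai u * Ai v) / (u - v)
      = ∫ z in Set.Ioi (0 : ℝ), Ai (u + z) * Ai (z + v) := by
  have hAinf : ContDiff ℝ ∞ Ai := hA.of_le (mod_cast le_top)
  have hAd : Differentiable ℝ Ai := hAinf.differentiable (by simp)
  have hAd' : Differentiable ℝ (deriv Ai) :=
    (contDiff_infty_iff_deriv.mp hAinf).2.differentiable (by simp)
  have hcont : Continuous Ai := hAd.continuous
  set F : ℝ → ℝ := fun z => Ai (u + z) * deriv Ai (v + z) - deriv Ai (u + z) * Ai (v + z) with hF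
  have hderiv : ∀ z : ℝ, HasDerivAt F ((v - u) * (Ai (u + z) * Ai (v + z))) z := by
    intro z
    have h1 : HasDerivAt (fun z => Ai (u + z)) (deriv Ai (u + z)) z := by
      simpa [Function.comp_def] using (hAd (u + z)).hasDerivAt.comp z ((hasDerivAt_id z).const_add u)
    have h2 : HasDerivAt (fun z => Ai (v + z)) (deriv Ai (v + z)) z := by
      simpa [Function.comp_def] using (hAd (v + z)).hasDerivAt.comp z ((hasDerivAt_id z).const_add v)
    have h3 : HasDerivAt (fun z => deriv Ai (u + z)) (deriv (deriv Ai) (u + z)) z := by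
      simpa [Function.comp_def] using (hAd' (u + z)).hasDerivAt.comp z ((hasDerivAt_id z).const_add u)
    have h4 : HasDerivAt (fun z => deriv Ai (v + z)) (deriv (deriv Ai) (v + z)) z := by
      simpa [Function.comp_def] using (hAd' (v + z)).hasDerivAt.comp z ((hasDerivAt_id z).const_add v)
    have := (h1.mul h4).sub (h3.mul h2)
    exact this.congr_deriv (by rw [hODE, hODE]; ring)
  have hC : 0 ≤ C := by
    have h := hdecay 0
    have : (0:ℝ) ≤ C * Real.exp (-0) := le_trans (abs_nonneg _) h
    simpa using this
  have hexpnn : ∀ y : ℝ, 0 ≤ C * Real.exp (-y) := fun y =>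
    mul_nonneg hC (Real.exp_pos _).le
  have hbound : ∀ z : ℝ, |Ai (u + z) * Ai (v + z)| ≤
      C ^ 2 * Real.exp (-u) * Real.exp (-v) * Real.exp (-(2 * z)) := by
    intro z
    calc |Ai (u + z) * Ai (v + z)| = |Ai (u + z)| * |Ai (v + z)| := abs_mul _ _
      _ ≤ (C * Real.exp (-(u + z))) * (C * Real.exp (-(v + z))) :=
          mul_le_mul (hdecay _) (hdecay _) (abs_nonneg _) (hexpnn _)
      _ = C ^ 2 * Real.exp (-u) * Real.exp (-v) * Real.exp (-(2 * z)) := by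
          rw [show (-(u+z)) = -u + -z by ring, show (-(v+z)) = -v + -z by ring,
            show (-(2*z)) = -z + -z by ring, Real.exp_add, Real.exp_add, Real.exp_add]
          ring
  have hint : IntegrableOn (fun z => Ai (u + z) * Ai (v + z)) (Ioi (0:ℝ)) := by
    have hexpint : IntegrableOn (fun z : ℝ => C ^ 2 * Real.exp (-u) * Real.exp (-v)
        * Real.exp (-(2 * z))) (Ioi (0:ℝ)) := by
      have := (exp_neg_integrableOn_Ioi (0:ℝ) (by norm_num : (0:ℝ) < 2)).const_mul
        (C ^ 2 * Real.exp (-u) * Real.exp (-v))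
      simp at this; exact this
    refine hexpint.mono' ?_ ?_
    · exact ((hcont.comp (continuous_const.add continuous_id)).mul
        (hcont.comp (continuous_const.add continuous_id))).aestronglyMeasurable
    · exact Filter.Eventually.of_forall fun z => by
        rw [Real.norm_eq_abs]; exact hbound z
  have htendsto : Tendsto F atTop (nhds 0) := by
    have hFb : ∀ z : ℝ, |F z| ≤
        2 * (C ^ 2 * Real.exp (-u) * Real.exp (-v)) * Real.exp (-(2*z)) := by
      intro z
      have e : (C * Real.exp (-(u + z))) * (C * Real.exp (-(v + z)))
          = C ^ 2 * Real.exp (-u) * Real.exp (-v) * Real.exp (-(2 * z)) := by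
        rw [show (-(u+z)) = -u + -z by ring, show (-(v+z)) = -v + -z by ring,
          show (-(2*z)) = -z + -z by ring, Real.exp_add, Real.exp_add, Real.exp_add]
        ring
      have hb1 : |Ai (u + z) * deriv Ai (v + z)|
          ≤ C ^ 2 * Real.exp (-u) * Real.exp (-v) * Real.exp (-(2 * z)) := by
        rw [abs_mul, ← e]
        exact mul_le_mul (hdecay _) (hdecay' _) (abs_nonneg _) (hexpnn _)
      have hb2 : |deriv Ai (u + z) * Ai (v + z)|
          ≤ C ^ 2 * Real.exp (-u) * Real.exp (-v) * Real.exp (-(2 * z)) := by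
        rw [abs_mul, ← e]
        exact mul_le_mul (hdecay' _) (hdecay _) (abs_nonneg _) (hexpnn _)
      calc |F z| ≤ |Ai (u + z) * deriv Ai (v + z)| + |deriv Ai (u + z) * Ai (v + z)| :=
            abs_sub _ _
        _ ≤ 2 * (C ^ 2 * Real.exp (-u) * Real.exp (-v)) * Real.exp (-(2*z)) := by
            linarith
    have hblim : Tendsto (fun z : ℝ => 2 * (C ^ 2 * Real.exp (-u) * Real.exp (-v))
        * Real.exp (-(2*z))) atTop (nhds 0) := by
      have h2z : Tendsto (fun z : ℝ => 2 * z) atTop atTop :=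
        Tendsto.const_mul_atTop (by norm_num) tendsto_id
      have := Real.tendsto_exp_neg_atTop_nhds_zero.comp h2z
      simpa using this.const_mul (2 * (C ^ 2 * Real.exp (-u) * Real.exp (-v)))
    have habs : Tendsto (fun z => |F z|) atTop (nhds 0) :=
      squeeze_zero (fun z => abs_nonneg _) hFb hblim
    exact tendsto_zero_iff_abs_tendsto_zero F |>.mpr habs
  have key : ∫ z in Ioi (0:ℝ), (v - u) * (Ai (u + z) * Ai (v + z)) = 0 - F 0 := by
    exact integral_Ioi_of_hasDerivAt_of_tendsto' (fun z _ => hderiv z)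
      (hint.const_mul (v - u)) htendsto
  rw [MeasureTheory.integral_const_mul] at key
  have hF0 : F 0 = Ai u * deriv Ai v - deriv Ai u * Ai v := by simp [hF]
  rw [hF0] at key
  have hI : (∫ z in Ioi (0:ℝ), Ai (u + z) * Ai (z + v))
      = ∫ z in Ioi (0:ℝ), Ai (u + z) * Ai (v + z) := by
    congr 1; funext z; rw [add_comm z v]
  rw [hI, eq_comm, eq_div_iff (sub_ne_zero.mpr huv)]
  linear_combination -key
end
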